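/- arXiv:2302.08394 — 4 statements merged into one kernel-verified Lean document; each statement's English description precedes it below -/
import Mathlib

section
/- For every rooted tree T, A_T(x, 1-x) = 1 - p_T(x), where A_T is the admissible-subtree polynomial and p_T(x) = 1 - P_T(x,-1). -/
open MvPolynomial

/-- A rooted tree: a root node together with a list of branches. -/
inductive RTree : Type
  | node : List RTree → RTree

/-- A rooted forest: a finite (possibly empty) list of rooted trees. -/
abbrev RForest : Type := List RTree

namespace RTree

/-- Number of vertices of a rooted tree. -/
def size : RTree → ℕ
  | .node ts => 1 + (ts.attach.map fun s => size s.1).sum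

  decreasing_by
    all_goals
      simp only [RTree.node.sizeOf_spec]
      have := List.sizeOf_lt_of_mem s.2
      omega

/-- Number of leaves of a rooted tree. -/
def leafCount : RTree → ℕ
  | .node [] => 1
  | .node (t :: ts) => ((t :: ts).attach.map fun s => leafCount s.1).sum

  decreasing_by
    all_goals
      simp only [RTree.node.sizeOf_spec]
      have := List.sizeOf_lt_of_mem s.2
      omega

/-- The bivariate generating polynomial `P_T(x,y)` of leaf-induced subtrees of `T`,
counted by number of vertices (`X 0`) and number of leaves (`X 1`). -/
noncomputable def Ptree : RTree → MvPolynomial (Fin 2) ℤ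
  | .node [] => 1 + X 0 * X 1
  | .node (t :: ts) =>
      1 - X 0 + X 0 * ((t :: ts).attach.map fun s => Ptree s.1).prod

  decreasing_by
    all_goals
      simp only [RTree.node.sizeOf_spec]
      have := List.sizeOf_lt_of_mem s.2
      omega

/-- The polynomial `p_T(x) = 1 - P_T(x,-1)`. -/
noncomputable def pPol (T : RTree) : Polynomial ℤ :=
  1 - MvPolynomial.aeval ![Polynomial.X, -1] (Ptree T)

/-- The bivariate generating polynomial `S_T(x,y)` of subtrees of `T` (empty or connected
containing the root), counted by vertices (`X 0`) and boundary vertices (`X 1`). -/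
noncomputable def Stree : RTree → MvPolynomial (Fin 2) ℤ
  | .node ts => X 1 + X 0 * (ts.attach.map fun s => Stree s.1).prod

  decreasing_by
    all_goals
      simp only [RTree.node.sizeOf_spec]
      have := List.sizeOf_lt_of_mem s.2
      omega

/-- The bivariate generating polynomial `A_T(x,y)` of admissible subtrees of `T`,
counted by vertices (`X 0`) and boundary vertices (`X 1`). -/
noncomputable def Atree : RTree → MvPolynomial (Fin 2) ℤ
  | .node [] => X 1
  | .node (t :: ts) =>
      X 1 + X 0 * ((t :: ts).attach.map fun s => Atree s.1).prod

  decreasing_by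
    all_goals
      simp only [RTree.node.sizeOf_spec]
      have := List.sizeOf_lt_of_mem s.2
      omega

/-- The trivariate polynomial `M_T(x,y,z)` (with `x = X 0`, `y = X 1`, `z = X 2`). -/
noncomputable def Mtree : RTree → MvPolynomial (Fin 3) ℤ
  | .node ts =>
      Polynomial.aeval (X 2) (pPol (.node ts)).divX +
        X 0 * ∑ i : Fin ts.length,
          Mtree (ts.get i) *
            ∏ j ∈ Finset.univ.erase i,
              MvPolynomial.rename Fin.castSucc (Atree (ts.get j))
  decreasing_by
    simp only [RTree.node.sizeOf_spec]
    have h : sizeOf (ts.get i) < sizeOf ts := List.sizeOf_lt_of_mem (List.get_mem ts i)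
    omega

/-- Number of vertices in the stem of a rooted tree. -/
def stemCount : RTree → ℕ
  | .node [t] => 1 + stemCount t
  | .node _ => 1

/-- Isomorphism of rooted trees. -/
def Iso : RTree → RTree → Prop
  | .node ts, .node us =>
      ∃ σ : Fin ts.length ≃ Fin us.length,
        ∀ i : Fin ts.length, Iso (ts.get i) (us.get (σ i))
  decreasing_by
    simp only [RTree.node.sizeOf_spec]
    have h : sizeOf (ts.get i) < sizeOf ts := List.sizeOf_lt_of_mem (List.get_mem ts i)
    omega

end RTree

namespace RForest

open RTree

/-- Number of vertices of a rooted forest. -/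
def size (F : RForest) : ℕ := (F.map RTree.size).sum

/-- Number of leaves of a rooted forest. -/
def leafCount (F : RForest) : ℕ := (F.map RTree.leafCount).sum

/-- The polynomial `P_F` of a rooted forest: product over components. -/
noncomputable def Pforest (F : RForest) : MvPolynomial (Fin 2) ℤ := (F.map Ptree).prod

/-- The polynomial `S_F` of a rooted forest: product over components. -/
noncomputable def Sforest (F : RForest) : MvPolynomial (Fin 2) ℤ := (F.map Stree).prod

/-- Number of vertices in the stem of a rooted forest (`0` unless the forest is a tree). -/
def stemCount : RForest → ℕ
  | [T] => RTree.stemCount T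
  | _ => 0

/-- Isomorphism of rooted forests: a matching of the components by isomorphisms. -/
def Iso (F G : RForest) : Prop :=
  ∃ σ : Fin F.length ≃ Fin G.length,
    ∀ i : Fin F.length, RTree.Iso (F.get i) (G.get (σ i))

end RForest

namespace RTree

theorem aeval_Atree_eq_aeval_Ptree {R : Type*} [CommRing R] (x : R) :
    ∀ T : RTree, aeval ![x, 1 - x] (Atree T) = aeval ![x, -1] (Ptree T)
  | .node [] => by
      rw [Atree, Ptree]
      simp only [map_add, map_one, map_mul, aeval_X, Matrix.cons_val_zero, Matrix.cons_val_one]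
      ring
  | .node (t :: ts) => by
      have ih : ∀ s ∈ (t :: ts).attach,
          aeval ![x, 1 - x] (Atree s.1) = aeval ![x, -1] (Ptree s.1) :=
        fun s _ => aeval_Atree_eq_aeval_Ptree x s.1
      rw [Atree, Ptree]
      simp only [map_add, map_sub, map_mul, map_one, aeval_X, Matrix.cons_val_zero,
        Matrix.cons_val_one, map_list_prod, List.map_map, Function.comp_def]
      rw [List.map_congr_left ih]
  decreasing_by
    simp only [RTree.node.sizeOf_spec]
    have := List.sizeOf_lt_of_mem s.2
    omega

end RTree

theorem stmt6 (T : RTree) :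
    MvPolynomial.aeval ![Polynomial.X, 1 - Polynomial.X] (RTree.Atree T) =
      1 - RTree.pPol T := by
  rw [RTree.pPol, sub_sub_cancel]
  exact RTree.aeval_Atree_eq_aeval_Ptree Polynomial.X T
end

section
/- For a rooted forest F, let s denote the number of vertices in the stem of F (with s = 0 if F has zero or at least two components). Then -∂P_F/∂x evaluated at (x,y) = (1,-1) equals s. -/
open MvPolynomial

/-!
Every `P_T` vanishes at `(1, -1)`: a leaf gives `1 + x y`, and an inner vertex gives
`1 - x + x ∏ P_{T_i}`, where the product vanishes by induction. By the Leibniz rule,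
`∂ₓ` of a product of two polynomials vanishing at `(1, -1)` vanishes there too, so forests
with several components and vertices with several children contribute nothing, and `-∂ₓ P` picks up
exactly one `1` for each vertex along the stem.
-/

theorem map_derivation_mul_eq_zero {R A B F : Type*} [CommSemiring R] [CommRing A]
    [Algebra R A] [CommRing B] [FunLike F A B] [RingHomClass F A B]
    (φ : F) (D : Derivation R A A) {a b : A} (ha : φ a = 0) (hb : φ b = 0) :
    φ (D (a * b)) = 0 := by
  simp [Derivation.leibniz, ha, hb]

namespace RTree

theorem Ptree_node_cons (t : RTree) (ts : List RTree) :
    Ptree (.node (t :: ts)) = 1 - X 0 + X 0 * ((t :: ts).map Ptree).prod := by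
  rw [Ptree]
  simp

theorem eval_Ptree : ∀ T : RTree, eval ![(1 : ℤ), -1] (Ptree T) = 0
  | .node [] => by simp [Ptree]
  | .node (t :: ts) => by simp [Ptree_node_cons, eval_Ptree t]

theorem eval_prod_Ptree (t : RTree) (ts : List RTree) :
    eval ![(1 : ℤ), -1] ((t :: ts).map Ptree).prod = 0 := by
  simp [eval_Ptree]

theorem eval_pderiv_prod_Ptree (t u : RTree) (us : List RTree) :
    eval ![(1 : ℤ), -1] (pderiv 0 ((t :: u :: us).map Ptree).prod) = 0 := by
  rw [List.map_cons, List.prod_cons]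
  exact map_derivation_mul_eq_zero _ _ (eval_Ptree t) (eval_prod_Ptree u us)

theorem eval_pderiv_Ptree :
    ∀ T : RTree, eval ![(1 : ℤ), -1] (pderiv 0 (Ptree T)) = -(stemCount T : ℤ)
  | .node [] => by simp [Ptree, stemCount]
  | .node [t] => by
    simp [Ptree_node_cons, stemCount, eval_Ptree t, eval_pderiv_Ptree t]
    ring
  | .node (t :: u :: us) => by
    have hstem : stemCount (.node (t :: u :: us)) = 1 := rfl
    simp only [Ptree_node_cons, hstem, map_add, map_sub, Derivation.leibniz, smul_eq_mul,
      map_mul, eval_prod_Ptree, eval_pderiv_prod_Ptree]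
    simp

end RTree

theorem stmt8 (F : RForest) :
    -(MvPolynomial.aeval ![(1 : ℤ), -1]
        (MvPolynomial.pderiv (0 : Fin 2) (RForest.Pforest F))) =
      (RForest.stemCount F : ℤ) := by
  rw [aeval_eq_eval]
  match F with
  | [] => simp [RForest.Pforest, RForest.stemCount]
  | [T] => simp [RForest.Pforest, RForest.stemCount, RTree.eval_pderiv_Ptree T]
  | T :: U :: F => rw [RForest.Pforest, RTree.eval_pderiv_prod_Ptree]; rfl
end

section
/- The polynomial invariant S is complete for rooted forests: two rooted forests F_1 and F_2 satisfy S_{F_1} = S_{F_2} if and only if F_1 and F_2 are isomorphic as rooted forests. -/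
open MvPolynomial

/-!
Read `S_T` as a polynomial in `x` over `ℤ[y]`. The recursion `S_T = y + x ∏ S_{T_i}` shows that
it is monic of degree `|T|` with constant coefficient `y`, and `S_T(x, 0) = x ^ |T|` (only `T`
itself has empty boundary). So `S_T` is Eisenstein at the prime `(y)`, hence irreducible. As
`ℤ[y][x]` is a UFD and the `S_T` are monic, `S_F` determines the multiset of the `S_{T_i}` of its
components, and `S_T` determines that of the `S` of its branches; induction on trees concludes.
-/

open scoped Polynomial

namespace List

variable {α : Type*}

theorem prod_map_eq_of_equiv {M : Type*} [CommMonoid M] {f : α → M} {l₁ l₂ : List α}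
    (σ : Fin l₁.length ≃ Fin l₂.length) (h : ∀ i, f (l₁.get i) = f (l₂.get (σ i))) :
    (l₁.map f).prod = (l₂.map f).prod := by
  rw [← Fin.prod_univ_fun_getElem, ← Fin.prod_univ_fun_getElem, ← σ.prod_comp]
  exact Finset.prod_congr rfl fun i _ => h i

theorem exists_equiv_of_perm_map {β : Type*} {f : α → β} {l₁ l₂ : List α}
    (h : (l₁.map f).Perm (l₂.map f)) :
    ∃ σ : Fin l₁.length ≃ Fin l₂.length, ∀ i, f (l₁.get i) = f (l₂.get (σ i)) := by
  classical
  let σ : Fin (l₁.map f).length ≃ Fin (l₂.map f).length :=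
    Equiv.ofBijective h.idxBij ⟨h.idxBij_injective, h.idxBij_surjective⟩
  refine ⟨(finCongr (length_map f)).symm.trans (σ.trans (finCongr (length_map f))), fun i => ?_⟩
  have := h.getElem_idxBij_eq_getElem (finCongr (length_map f).symm i)
  simp only [getElem_map] at this
  exact this.symm

end List

namespace Polynomial

theorem Monic.C_add_X_mul {R : Type*} [CommSemiring R] [Nontrivial R] {p : R[X]} (hp : p.Monic)
    (a : R) : (C a + X * p).Monic := by
  refine (monic_X.mul hp).add_of_right (degree_lt_degree ?_)
  rw [natDegree_C, natDegree_X_mul hp.ne_zero]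
  omega

theorem normalizedFactors_prod_of_monic_of_irreducible {R : Type*} [CommRing R] [IsDomain R]
    [NormalizationMonoid R] [UniqueFactorizationMonoid R] {s : Multiset R[X]}
    (hs : ∀ p ∈ s, p.Monic ∧ Irreducible p) :
    UniqueFactorizationMonoid.normalizedFactors s.prod = s := by
  rw [UniqueFactorizationMonoid.normalizedFactors_prod_eq s fun p hp => (hs p hp).2,
    Multiset.map_congr rfl fun p hp => (hs p hp).1.normalize_eq_self, Multiset.map_id']

end Polynomial

namespace RTree

@[induction_eliminator]
theorem induction {motive : RTree → Prop}
    (node : ∀ ts, (∀ t ∈ ts, motive t) → motive (node ts)) (T : RTree) : motive T :=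
  RTree.rec (motive_2 := fun ts => ∀ t ∈ ts, motive t) node (by simp)
    (fun _ _ ht hts => List.forall_mem_cons.mpr ⟨ht, hts⟩) T

theorem size_node (ts : List RTree) : size (node ts) = 1 + (ts.map size).sum := by
  rw [size, List.attach_map_val]

theorem size_pos (T : RTree) : 0 < size T := by
  cases T
  rw [size_node]
  omega

theorem Stree_node (ts : List RTree) : Stree (node ts) = X 1 + X 0 * (ts.map Stree).prod := by
  rw [Stree, List.attach_map_val]

theorem iso_node_iff {ts us : List RTree} : Iso (node ts) (node us) ↔
    ∃ σ : Fin ts.length ≃ Fin us.length, ∀ i, Iso (ts.get i) (us.get (σ i)) := by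
  rw [Iso]

/-- A polynomial in `x = X 0`, `y = X 1` as a polynomial in `x` over `ℤ[y]`. -/
noncomputable def toPolyPoly : MvPolynomial (Fin 2) ℤ →ₐ[ℤ] (ℤ[X])[X] :=
  aeval ![Polynomial.X, Polynomial.C Polynomial.X]

noncomputable def Sx (T : RTree) : (ℤ[X])[X] := toPolyPoly (Stree T)

theorem prod_map_Sx (l : List RTree) : (l.map Sx).prod = toPolyPoly (l.map Stree).prod := by
  rw [map_list_prod, List.map_map]
  rfl

theorem Sx_node (ts : List RTree) :
    Sx (node ts) = Polynomial.C Polynomial.X + Polynomial.X * (ts.map Sx).prod := by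
  simp [Sx, Stree_node, prod_map_Sx, toPolyPoly]

theorem Sx_map_evalZero (T : RTree) :
    (Sx T).map (Polynomial.evalRingHom 0) = Polynomial.X ^ size T := by
  induction T with | node ts ih =>
  have hprod : ((ts.map Sx).prod).map (Polynomial.evalRingHom 0) =
      Polynomial.X ^ (ts.map size).sum := by
    rw [Polynomial.map_list_prod, List.map_map,
      List.map_congr_left (f := Polynomial.map (Polynomial.evalRingHom 0) ∘ Sx) ih,
      ← Fin.prod_univ_fun_getElem, Finset.prod_pow_eq_pow_sum, Fin.sum_univ_fun_getElem]
  rw [Sx_node, Polynomial.map_add, Polynomial.map_mul, hprod, size_node, pow_add]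
  simp

theorem monic_Sx (T : RTree) : (Sx T).Monic := by
  induction T with | node ts ih =>
  rw [Sx_node]
  refine Polynomial.Monic.C_add_X_mul ?_ _
  simpa using Polynomial.monic_multiset_prod_of_monic (ts : Multiset RTree) Sx (by simpa using ih)

theorem natDegree_Sx (T : RTree) : (Sx T).natDegree = size T := by
  rw [← (monic_Sx T).natDegree_map (Polynomial.evalRingHom 0), Sx_map_evalZero,
    Polynomial.natDegree_X_pow]

theorem coeff_zero_Sx (T : RTree) : (Sx T).coeff 0 = Polynomial.X := by
  cases T
  simp [Sx_node]

theorem isEisensteinAt_Sx (T : RTree) :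
    (Sx T).IsEisensteinAt (Ideal.span {Polynomial.X}) where
  leading := by
    rw [(monic_Sx T).leadingCoeff, Ideal.mem_span_singleton, Polynomial.X_dvd_iff]
    simp
  mem {n} hn := by
    have hcoeff := congrArg (Polynomial.coeff · n) (Sx_map_evalZero T)
    rw [natDegree_Sx] at hn
    simp only [Polynomial.coeff_map, Polynomial.coeff_X_pow, hn.ne, if_false] at hcoeff
    rwa [Ideal.mem_span_singleton, Polynomial.X_dvd_iff, Polynomial.coeff_zero_eq_eval_zero]
  notMem := by
    rw [coeff_zero_Sx, Ideal.span_singleton_pow, Ideal.mem_span_singleton,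
      Polynomial.X_pow_dvd_iff]
    intro h
    simpa using h 1 one_lt_two

theorem irreducible_Sx (T : RTree) : Irreducible (Sx T) :=
  (isEisensteinAt_Sx T).irreducible
    ((Ideal.span_singleton_prime Polynomial.X_ne_zero).mpr Polynomial.prime_X)
    (monic_Sx T).isPrimitive (natDegree_Sx T ▸ size_pos T)

theorem normalizedFactors_prod_map_Sx (l : List RTree) :
    UniqueFactorizationMonoid.normalizedFactors (l.map Sx).prod = (l.map Sx : Multiset _) := by
  rw [← Multiset.prod_coe, Polynomial.normalizedFactors_prod_of_monic_of_irreducible]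
  intro p hp
  obtain ⟨T, -, rfl⟩ := List.mem_map.mp (Multiset.mem_coe.mp hp)
  exact ⟨monic_Sx T, irreducible_Sx T⟩

theorem exists_equiv_of_prod_map_Sx_eq {l₁ l₂ : List RTree}
    (h : (l₁.map Sx).prod = (l₂.map Sx).prod) :
    ∃ σ : Fin l₁.length ≃ Fin l₂.length, ∀ i, Sx (l₁.get i) = Sx (l₂.get (σ i)) := by
  refine List.exists_equiv_of_perm_map (Multiset.coe_eq_coe.mp ?_)
  rw [← normalizedFactors_prod_map_Sx, h, normalizedFactors_prod_map_Sx]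

theorem iso_of_Sx_eq {T₁ T₂ : RTree} (h : Sx T₁ = Sx T₂) : Iso T₁ T₂ := by
  induction T₁ generalizing T₂ with | node ts ih =>
  obtain ⟨us⟩ := T₂
  rw [Sx_node, Sx_node, add_right_inj, mul_right_inj' Polynomial.X_ne_zero] at h
  obtain ⟨σ, hσ⟩ := exists_equiv_of_prod_map_Sx_eq h
  exact iso_node_iff.mpr ⟨σ, fun i => ih _ (List.get_mem ts i) (hσ i)⟩

theorem Stree_eq_of_iso {T₁ T₂ : RTree} (h : Iso T₁ T₂) : Stree T₁ = Stree T₂ := by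
  induction T₁ generalizing T₂ with | node ts ih =>
  obtain ⟨us⟩ := T₂
  obtain ⟨σ, hσ⟩ := iso_node_iff.mp h
  rw [Stree_node, Stree_node,
    List.prod_map_eq_of_equiv σ fun i => ih _ (List.get_mem ts i) (hσ i)]

end RTree

theorem stmt13 (F₁ F₂ : RForest) :
    RForest.Sforest F₁ = RForest.Sforest F₂ ↔ RForest.Iso F₁ F₂ := by
  constructor
  · intro h
    have hx : (F₁.map RTree.Sx).prod = (F₂.map RTree.Sx).prod := by
      rw [RTree.prod_map_Sx, RTree.prod_map_Sx, ← RForest.Sforest, ← RForest.Sforest, h]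
    obtain ⟨σ, hσ⟩ := RTree.exists_equiv_of_prod_map_Sx_eq hx
    exact ⟨σ, fun i => RTree.iso_of_Sx_eq (hσ i)⟩
  · rintro ⟨σ, hσ⟩
    exact List.prod_map_eq_of_equiv σ fun i => RTree.Stree_eq_of_iso (hσ i)
end

section
/- For every rooted tree T, M_T(x, 1-x, x) = d/dx p_T(x), where p_T(x) = 1 - P_T(x, -1). -/
open MvPolynomial

/-!
At `x = z` and `y = 1 - x` the admissible-subtree polynomial `A_T` becomes `1 - p_T`, and
`p_T = x (1 - ∏ᵢ (1 - p_{Tᵢ}))` over the branches `Tᵢ` of the root (`p_T = x` for a single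
vertex). The recursion for `M_T` then unfolds to the product rule for this identity:
`(x q)' = q + x q'` with `q' = ∑ᵢ p_{Tᵢ}' ∏_{j ≠ i} (1 - p_{Tⱼ})`.
-/

namespace Polynomial

variable {R : Type*}

theorem divX_X_mul [Semiring R] (p : R[X]) : divX (X * p) = p := by
  ext n
  rw [coeff_divX, coeff_X_mul]

theorem divX_X [Semiring R] : divX (X : R[X]) = 1 := by
  simpa using divX_X_mul (1 : R[X])

theorem derivative_one_sub_prod_one_sub [CommRing R] {ι : Type*} [DecidableEq ι]
    (s : Finset ι) (f : ι → R[X]) :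
    derivative (1 - ∏ i ∈ s, (1 - f i)) =
      ∑ i ∈ s, derivative (f i) * ∏ j ∈ s.erase i, (1 - f j) := by
  simp only [derivative_sub, derivative_one, zero_sub, derivative_prod_finset,
    ← Finset.sum_neg_distrib, mul_neg, neg_neg, mul_comm]

end Polynomial

namespace RTree

@[elab_as_elim]
theorem node_induction {motive : RTree → Prop}
    (node : ∀ ts, (∀ t ∈ ts, motive t) → motive (.node ts)) : ∀ T, motive T
  | .node ts => node ts fun t _ => node_induction node t
decreasing_by
  simp only [RTree.node.sizeOf_spec]
  have := List.sizeOf_lt_of_mem ‹t ∈ ts›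
  omega

theorem pPol_leaf : pPol (.node []) = Polynomial.X := by
  simp [pPol, Ptree]

theorem pPol_node {ts : List RTree} (hts : ts ≠ []) :
    pPol (.node ts) = Polynomial.X * (1 - (ts.map fun t => 1 - pPol t).prod) := by
  obtain ⟨t, ts, rfl⟩ := List.exists_cons_of_ne_nil hts
  have hPtree (s : RTree) : MvPolynomial.aeval ![Polynomial.X, -1] (Ptree s) = 1 - pPol s :=
    (sub_sub_cancel _ _).symm
  rw [pPol, Ptree, List.attach_map_val]
  simp only [map_add, map_sub, map_mul, map_one, map_list_prod, List.map_map, Function.comp_def,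
    hPtree, MvPolynomial.aeval_X, Matrix.cons_val_zero]
  ring

theorem aeval_Atree (T : RTree) :
    MvPolynomial.aeval ![Polynomial.X, 1 - Polynomial.X] (Atree T) = 1 - pPol T := by
  induction T using node_induction with
  | node ts ih =>
    rcases ts with _ | ⟨t, ts⟩
    · simp [Atree, pPol_leaf]
    · rw [Atree, pPol_node (List.cons_ne_nil t ts), List.attach_map_val]
      simp only [map_add, map_mul, map_list_prod, List.map_map, MvPolynomial.aeval_X]
      rw [List.map_congr_left (f := MvPolynomial.aeval _ ∘ Atree) (g := fun t => 1 - pPol t) ih]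
      simp only [Matrix.cons_val_zero, Matrix.cons_val_one, Matrix.cons_val_fin_one]
      ring

theorem aeval_Mtree_node (ts : List RTree) :
    MvPolynomial.aeval ![Polynomial.X, 1 - Polynomial.X, Polynomial.X] (Mtree (.node ts)) =
      (pPol (.node ts)).divX + Polynomial.X * ∑ i : Fin ts.length,
        MvPolynomial.aeval ![Polynomial.X, 1 - Polynomial.X, Polynomial.X] (Mtree ts[i.1]) *
          ∏ j ∈ Finset.univ.erase i, (1 - pPol ts[j.1]) := by
  have hrestrict : ![Polynomial.X, 1 - Polynomial.X, Polynomial.X] ∘ Fin.castSucc =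
      ![(Polynomial.X : Polynomial ℤ), 1 - Polynomial.X] := by
    funext i
    fin_cases i <;> rfl
  rw [Mtree, map_add, ← Polynomial.aeval_algHom_apply]
  simp [MvPolynomial.aeval_rename, hrestrict, aeval_Atree]

end RTree

theorem stmt15 (T : RTree) :
    MvPolynomial.aeval ![Polynomial.X, 1 - Polynomial.X, Polynomial.X] (RTree.Mtree T) =
      Polynomial.derivative (RTree.pPol T) := by
  induction T using RTree.node_induction with
  | node ts ih =>
    rw [RTree.aeval_Mtree_node]
    have hbranch (i : Fin ts.length) := ih ts[i.1] (List.getElem_mem i.isLt)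
    simp only [hbranch]
    rcases eq_or_ne ts [] with rfl | hts
    · simp [RTree.pPol_leaf, Polynomial.divX_X]
    · rw [RTree.pPol_node hts, ← Fin.prod_univ_fun_getElem, Polynomial.divX_X_mul,
        Polynomial.derivative_mul, Polynomial.derivative_X, one_mul,
        Polynomial.derivative_one_sub_prod_one_sub]
end
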